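/- arXiv:1807.02779 — 2 statements merged into one kernel-verified Lean document; each statement's English description precedes it below -/
import Mathlib

section
/- For any vector x ∈ ℝ^n, the cyclic sign variation count s_c^-(x) equals s^-(x) if s^-(x) is even, and equals s^-(x) + 1 if s^-(x) is odd. -/
/-- Number of sign changes in a list of reals: the number of adjacent pairs
with strictly negative product. -/
noncomputable def signChanges : List ℝ → ℕ
  | a :: b :: l => (if a * b < 0 then 1 else 0) + signChanges (b :: l)
  | _ => 0

/-- `s⁻` of a list: sign changes after deleting all zero entries. -/
noncomputable def sMinusList (l : List ℝ) : ℕ :=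
  signChanges (l.filter (fun a => decide (a ≠ 0)))

/-- `s⁻(x)`: the number of sign changes in `x` after deleting all zero entries. -/
noncomputable def sMinus {n : ℕ} (x : Fin n → ℝ) : ℕ :=
  sMinusList (List.ofFn x)

/-- Replace each zero entry of `x` by `1` or `-1` according to `ε`. -/
noncomputable def replZeros {n : ℕ} (x : Fin n → ℝ) (ε : Fin n → Bool) : Fin n → ℝ :=
  fun i => if x i = 0 then (if ε i then 1 else -1) else x i

/-- `s⁺(x)`: the maximal number of sign changes over all replacements of the
zero entries of `x` by `±1`. -/
noncomputable def sPlus {n : ℕ} (x : Fin n → ℝ) : ℕ :=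
  Finset.univ.sup fun ε : Fin n → Bool => signChanges (List.ofFn (replZeros x ε))

/-- The cyclically rotated vector `[x i, …, x (n-1), x 0, …, x i]` (of length `n+1`),
as a list. -/
noncomputable def rotList {n : ℕ} (x : Fin n → ℝ) (i : Fin n) : List ℝ :=
  (List.ofFn x).rotate i.val ++ [x i]

/-- The cyclic sign variation count `s_c⁻(x)`: the maximum of `s⁻` over all
cyclic rotations `[x i, …, x (n-1), x 0, …, x i]`. -/
noncomputable def sMinusC {n : ℕ} (x : Fin n → ℝ) : ℕ :=
  Finset.univ.sup fun i : Fin n => sMinusList (rotList x i)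

/-- The cyclic sign variation count `s_c⁺(x)`: the maximum of `s⁺` over all
cyclic rotations, where the two copies of the entry `x i` at the two ends of a
rotation are replaced by the same sign. -/
noncomputable def sPlusC {n : ℕ} (x : Fin n → ℝ) : ℕ :=
  Finset.univ.sup fun p : (Fin n → Bool) × Fin n =>
    signChanges (rotList (replZeros x p.1) p.2)

/-- `A` is strictly sign-regular of order `k` (`SSR_k`): all `k×k` minors are
nonzero and have the same sign. -/
def SSRof {n m : ℕ} (A : Matrix (Fin n) (Fin m) ℝ) (k : ℕ) : Prop :=
  (∀ (α : Fin k → Fin n) (β : Fin k → Fin m), StrictMono α → StrictMono β →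
      0 < (A.submatrix α β).det) ∨
  (∀ (α : Fin k → Fin n) (β : Fin k → Fin m), StrictMono α → StrictMono β →
      (A.submatrix α β).det < 0)

/-- `A` is sign-regular of order `k` (`SR_k`): all `k×k` minors have the same
non-strict sign. -/
def SRof {n m : ℕ} (A : Matrix (Fin n) (Fin m) ℝ) (k : ℕ) : Prop :=
  (∀ (α : Fin k → Fin n) (β : Fin k → Fin m), StrictMono α → StrictMono β →
      0 ≤ (A.submatrix α β).det) ∨
  (∀ (α : Fin k → Fin n) (β : Fin k → Fin m), StrictMono α → StrictMono β →
      (A.submatrix α β).det ≤ 0)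

/-- A square matrix is Metzler if all its off-diagonal entries are nonnegative. -/
def IsMetzler {n : ℕ} (A : Matrix (Fin n) (Fin n) ℝ) : Prop :=
  ∀ i j : Fin n, i ≠ j → 0 ≤ A i j

/-- A square matrix is irreducible if the directed graph with an edge from `i`
to `j` whenever `i ≠ j` and `A i j ≠ 0` is strongly connected. -/
def IsIrreducibleMatrix {n : ℕ} (A : Matrix (Fin n) (Fin n) ℝ) : Prop :=
  ∀ i j : Fin n, i ≠ j → Relation.TransGen (fun p q : Fin n => p ≠ q ∧ A p q ≠ 0) i j

/-- Membership in `Q`: Metzler, and the nonzero entries lie only on the main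
diagonal, the super- and sub-diagonals, and the corner positions `(1,n)`, `(n,1)`
(in 0-indexed form: `(0, n-1)` and `(n-1, 0)`). -/
def memQ {n : ℕ} (A : Matrix (Fin n) (Fin n) ℝ) : Prop :=
  IsMetzler A ∧ ∀ i j : Fin n, A i j ≠ 0 →
    ((i : ℕ) = (j : ℕ) ∨ (j : ℕ) = (i : ℕ) + 1 ∨ (i : ℕ) = (j : ℕ) + 1 ∨
      ((i : ℕ) = 0 ∧ (j : ℕ) = n - 1) ∨ ((i : ℕ) = n - 1 ∧ (j : ℕ) = 0))

/-- Membership in `Q⁺`: in `Q` and irreducible. -/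
def memQplus {n : ℕ} (A : Matrix (Fin n) (Fin n) ℝ) : Prop :=
  memQ A ∧ IsIrreducibleMatrix A

/-- `P` is the permutation matrix of a cyclic shift `j ↦ j + k (mod n)`. -/
def IsCyclicPermMatrix {n : ℕ} (P : Matrix (Fin n) (Fin n) ℝ) : Prop :=
  ∃ k : ℕ, ∀ i j : Fin n, P i j = if (j : ℕ) % n = ((i : ℕ) + k) % n then 1 else 0

/-!
Delete the zeros of `x` to obtain a list `z` of nonzero reals. After deleting zeros, the
rotation of `x` starting at entry `i` becomes a rotation of `z`, closed up by its first entry when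
`x i ≠ 0` and left open when `x i = 0`. The number of sign changes around a closed ring does not
depend on where the ring is cut, so `s_c⁻(x)` is the number of sign changes of `z` read
cyclically. A closed ring of nonzero reals changes sign an even number of times, and closing
`z` adds at most one sign change to `s⁻(x) = s⁻(z)`.
-/

lemma signChanges_cons_cons (a b : ℝ) (l : List ℝ) :
    signChanges (a :: b :: l) = (if a * b < 0 then 1 else 0) + signChanges (b :: l) := rfl

lemma signChanges_append_cons :
    ∀ (l : List ℝ) (a : ℝ) (l' : List ℝ),
      signChanges (l ++ a :: l') = signChanges (l ++ [a]) + signChanges (a :: l')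
  | [], _, _ => by simp [signChanges]
  | [b], a, l' => by simp [signChanges_cons_cons, signChanges]
  | b :: c :: t, a, l' => by
    simp only [List.cons_append, signChanges_cons_cons]
    rw [← List.cons_append, ← List.cons_append, signChanges_append_cons (c :: t) a l']
    omega

lemma signChanges_append_singleton_mem_Icc :
    ∀ (l : List ℝ) (c : ℝ),
      signChanges (l ++ [c]) ∈ Set.Icc (signChanges l) (signChanges l + 1)
  | [], _ => by simp [signChanges]
  | [b], c => by
    simp only [List.cons_append, List.nil_append, signChanges_cons_cons]
    split_ifs <;> simp [signChanges]
  | b :: d :: t, c => by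
    have ih := signChanges_append_singleton_mem_Icc (d :: t) c
    simp only [Set.mem_Icc, List.cons_append, signChanges_cons_cons] at ih ⊢
    omega

lemma mul_pos_iff_of_ne_zero {u v w : ℝ} (hu : u ≠ 0) (hv : v ≠ 0) (hw : w ≠ 0) :
    0 < u * w ↔ (0 < u * v ↔ 0 < v * w) := by
  rcases hu.lt_or_gt with hu | hu <;> rcases hv.lt_or_gt with hv | hv <;>
    rcases hw.lt_or_gt with hw | hw <;> simp [mul_pos_iff, *, hu.not_gt, hv.not_gt, hw.not_gt]

lemma even_signChanges_cons_append_singleton_iff (b : ℝ) (hb : b ≠ 0) :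
    ∀ (a : ℝ) (t : List ℝ), a ≠ 0 → (∀ y ∈ t, y ≠ 0) →
      (Even (signChanges (a :: t ++ [b])) ↔ 0 < a * b)
  | a, [], ha, _ => by
    simp only [List.cons_append, List.nil_append, signChanges_cons_cons]
    by_cases hab : a * b < 0
    · simp [hab, signChanges, hab.not_gt]
    · simp [hab, signChanges, (mul_ne_zero ha hb).lt_of_le' (not_lt.1 hab)]
  | a, c :: t, ha, ht => by
    have hc : c ≠ 0 := ht c (by simp)
    have ih := even_signChanges_cons_append_singleton_iff b hb c t hc
      (fun y hy => ht y (List.mem_cons_of_mem c hy))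
    change Even (signChanges (a :: c :: (t ++ [b]))) ↔ _
    rw [signChanges_cons_cons, ← List.cons_append, mul_pos_iff_of_ne_zero ha hc hb, ← ih]
    by_cases hac : a * c < 0
    · simp [hac, hac.not_gt, add_comm 1, Nat.even_add_one]
    · simp [hac, (mul_ne_zero ha hc).lt_of_le' (not_lt.1 hac)]

noncomputable def cyclicSignChanges (l : List ℝ) : ℕ :=
  signChanges (l ++ l.take 1)

lemma signChanges_le_cyclicSignChanges (l : List ℝ) : signChanges l ≤ cyclicSignChanges l := by
  rcases l with _ | ⟨a, t⟩
  · simp [cyclicSignChanges]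
  · exact (signChanges_append_singleton_mem_Icc (a :: t) a).1

lemma cyclicSignChanges_eq_ite {l : List ℝ} (hl : ∀ y ∈ l, y ≠ 0) :
    cyclicSignChanges l =
      if Even (signChanges l) then signChanges l else signChanges l + 1 := by
  rcases l with _ | ⟨a, t⟩
  · simp [cyclicSignChanges, signChanges]
  have ha : a ≠ 0 := hl a (by simp)
  have heven : Even (cyclicSignChanges (a :: t)) :=
    (even_signChanges_cons_append_singleton_iff a ha a t ha
      fun y hy => hl y (List.mem_cons_of_mem a hy)).2 (mul_self_pos.2 ha)
  have hbounds := signChanges_append_singleton_mem_Icc (a :: t) a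
  rw [Set.mem_Icc] at hbounds
  change Even (signChanges (a :: t ++ [a])) at heven
  change signChanges (a :: t ++ [a]) = _
  rw [Nat.even_iff] at heven
  split_ifs with h <;> rw [Nat.even_iff] at h <;> omega

lemma cyclicSignChanges_append_comm (l l' : List ℝ) :
    cyclicSignChanges (l ++ l') = cyclicSignChanges (l' ++ l) := by
  rcases l with _ | ⟨a, s⟩
  · simp
  rcases l' with _ | ⟨b, s'⟩
  · simp
  -- cutting the ring at the two junctions leaves two open paths, each closed by the other's head
  have hcut : ∀ (a b : ℝ) (s s' : List ℝ), cyclicSignChanges (a :: s ++ b :: s') =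
      signChanges (a :: s ++ [b]) + signChanges (b :: s' ++ [a]) := by
    intro a b s s'
    have hring :
        a :: s ++ b :: s' ++ (a :: s ++ b :: s').take 1 = a :: s ++ b :: (s' ++ [a]) := by
      simp
    rw [cyclicSignChanges, hring, signChanges_append_cons]
    rfl
  rw [hcut, hcut, add_comm]

lemma List.IsRotated.cyclicSignChanges_eq {l l' : List ℝ} (h : l ~r l') :
    cyclicSignChanges l = cyclicSignChanges l' := by
  obtain ⟨k, hk, rfl⟩ := List.isRotated_iff_mod.1 h
  rw [List.rotate_eq_drop_append_take hk, cyclicSignChanges_append_comm, List.take_append_drop]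

lemma List.IsRotated.filter {α : Type*} {l l' : List α} (h : l ~r l') (p : α → Bool) :
    l.filter p ~r l'.filter p := by
  obtain ⟨k, hk, rfl⟩ := List.isRotated_iff_mod.1 h
  conv_lhs => rw [← List.take_append_drop k l]
  rw [List.rotate_eq_drop_append_take hk, List.filter_append, List.filter_append]
  exact List.isRotated_append

lemma take_one_filter_rotate_of_getElem {α : Type*} {p : α → Bool} {l : List α} {k : ℕ}
    (hk : k < l.length) (hp : p l[k]) : ((l.rotate k).filter p).take 1 = [l[k]] := by
  rw [List.rotate_eq_drop_append_take hk.le, List.drop_eq_getElem_cons hk, List.cons_append,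
    List.filter_cons_of_pos hp, List.take_succ_cons, List.take_zero]

lemma sMinusList_rotate_append_getElem_le {l : List ℝ} {k : ℕ} (hk : k < l.length) :
    sMinusList (l.rotate k ++ [l[k]]) ≤
      cyclicSignChanges (l.filter fun a => decide (a ≠ 0)) := by
  rw [sMinusList, List.filter_append,
    ← ((List.IsRotated.forall l k).filter _).cyclicSignChanges_eq]
  by_cases h : l[k] = 0
  · simpa [h] using signChanges_le_cyclicSignChanges _
  · rw [cyclicSignChanges, take_one_filter_rotate_of_getElem hk (by simpa using h)]
    simp [h]

lemma sMinusList_rotate_append_getElem_eq {l : List ℝ} {k : ℕ} (hk : k < l.length)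
    (h : l[k] ≠ 0) :
    sMinusList (l.rotate k ++ [l[k]]) = cyclicSignChanges (l.filter fun a => decide (a ≠ 0)) := by
  rw [sMinusList, List.filter_append,
    ← ((List.IsRotated.forall l k).filter _).cyclicSignChanges_eq, cyclicSignChanges,
    take_one_filter_rotate_of_getElem hk (by simpa using h)]
  simp [h]

lemma sMinusC_eq_cyclicSignChanges {n : ℕ} (x : Fin n → ℝ) :
    sMinusC x = cyclicSignChanges ((List.ofFn x).filter fun a => decide (a ≠ 0)) := by
  have hrot : ∀ i : Fin n,
      rotList x i = (List.ofFn x).rotate i ++ [(List.ofFn x)[(i : ℕ)]'(by simp)] := by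
    simp [rotList]
  refine le_antisymm (Finset.sup_le fun i _ => hrot i ▸ sMinusList_rotate_append_getElem_le _) ?_
  by_cases hx : ∀ i, x i = 0
  · have hnil : (List.ofFn x).filter (fun a => decide (a ≠ 0)) = [] :=
      List.filter_eq_nil_iff.2 (by simp [hx])
    rw [hnil]
    exact Nat.zero_le _
  · obtain ⟨i, hi⟩ := not_forall.1 hx
    rw [← sMinusList_rotate_append_getElem_eq (k := i) (by simp) (by simpa using hi), ← hrot]
    exact Finset.le_sup (f := fun i => sMinusList (rotList x i)) (Finset.mem_univ i)

/-- For any `x ∈ ℝⁿ`, `s_c⁻(x) = s⁻(x)` if `s⁻(x)` is even and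
`s_c⁻(x) = s⁻(x) + 1` if `s⁻(x)` is odd. -/
theorem cyclic_sMinus_eq (n : ℕ) (x : Fin n → ℝ) :
    sMinusC x = if Even (sMinus x) then sMinus x else sMinus x + 1 := by
  rw [sMinusC_eq_cyclicSignChanges]
  exact cyclicSignChanges_eq_ite fun y hy => by simpa using (List.mem_filter.1 hy).2
end

section
/- Let A ∈ ℝ^{n×n} be nonsingular and let p ∈ {0, 1, …, n−1}. The following two conditions are equivalent: (1) for every vector c ∈ ℝ^n \ {0} with s^-(c) ≤ p, one has s^+(Ac) ≤ p; (2) A is strictly sign-regular of order p+1 (SSR_{p+1}), i.e. all (p+1)×(p+1) minors of A are nonzero and have the same sign. -/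
lemma signChanges_zero_cons (l : List ℝ) : signChanges (0 :: l) = signChanges l := by
  cases l <;> simp [signChanges]

lemma signChanges_le_cons (a : ℝ) (l : List ℝ) : signChanges l ≤ signChanges (a :: l) := by
  cases l <;> simp [signChanges]

lemma signChanges_cons_le_cons_cons (a : ℝ) {b : ℝ} (hb : b ≠ 0) (l : List ℝ) :
    signChanges (a :: l) ≤ signChanges (a :: b :: l) := by
  cases l with
  | nil => simp [signChanges]
  | cons x l =>
    have : a * x < 0 → a * b < 0 ∨ b * x < 0 := by
      intro h
      by_contra! h'
      nlinarith [mul_nonneg h'.1 h'.2, mul_self_pos.2 hb]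
    simp only [signChanges_cons_cons]
    split_ifs <;> simp_all
    omega

lemma signChanges_cons_le_cons_of_sublist {l₁ l₂ : List ℝ} (h : l₁.Sublist l₂)
    (hl₂ : ∀ x ∈ l₂, x ≠ 0) (a : ℝ) : signChanges (a :: l₁) ≤ signChanges (a :: l₂) := by
  induction h generalizing a with
  | slnil => rfl
  | cons b _ ih =>
    exact (ih (fun x hx => hl₂ x (.tail _ hx)) a).trans
      (signChanges_cons_le_cons_cons a (hl₂ b (.head _)) _)
  | cons_cons b _ ih =>
    simpa only [signChanges_cons_cons, Nat.add_le_add_iff_left]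
      using ih (fun x hx => hl₂ x (.tail _ hx)) b

lemma signChanges_le_of_sublist {l₁ l₂ : List ℝ} (h : l₁.Sublist l₂) (hl₂ : ∀ x ∈ l₂, x ≠ 0) :
    signChanges l₁ ≤ signChanges l₂ := by
  simpa only [signChanges_zero_cons] using signChanges_cons_le_cons_of_sublist h hl₂ 0

lemma signChanges_of_isChain :
    ∀ {l : List ℝ}, l.IsChain (fun a b => a * b < 0) → signChanges l = l.length - 1
  | [], _ | [_], _ => rfl
  | a :: b :: l, h => by
    rw [List.isChain_cons_cons] at h
    rw [signChanges_cons_cons, if_pos h.1, signChanges_of_isChain h.2]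
    simp only [List.length_cons]
    omega

lemma exists_isChain_cons_sublist (a : ℝ) (l : List ℝ) (hl : ∀ x ∈ a :: l, x ≠ 0) :
    ∃ t, (a :: t).Sublist (a :: l) ∧ (a :: t).IsChain (fun x y => x * y < 0) ∧
      t.length = signChanges (a :: l) := by
  induction l generalizing a with
  | nil => exact ⟨[], .refl _, .singleton a, rfl⟩
  | cons b l ih =>
    obtain ⟨t, hsub, hchain, hlen⟩ := ih b (fun x hx => hl x (.tail _ hx))
    rw [signChanges_cons_cons]
    by_cases hab : a * b < 0
    · exact ⟨b :: t, hsub.cons_cons a, hchain.cons_cons hab, by simp [hab, hlen]; omega⟩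
    · have hab : 0 < a * b := lt_of_le_of_ne (not_lt.1 hab)
        (mul_ne_zero (hl a (.head _)) (hl b (.tail _ (.head _)))).symm
      refine ⟨t, ((List.cons_sublist_cons.1 hsub).cons b).cons_cons a, ?_,
        by simp [hab.not_gt, hlen]⟩
      cases t with
      | nil => exact .singleton a
      | cons x t =>
        rw [List.isChain_cons_cons] at hchain ⊢
        refine ⟨?_, hchain.2⟩
        by_contra! hax
        nlinarith [mul_neg_of_pos_of_neg hab hchain.1, mul_nonneg (mul_self_nonneg b) hax]

/-! ### Alternating subsequences -/

lemma List.ofFn_comp_sublist {α : Type*} {m n : ℕ} (c : Fin n → α) {t : Fin m → Fin n}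
    (ht : StrictMono t) : (List.ofFn (c ∘ t)).Sublist (List.ofFn c) := by
  rw [List.sublist_iff_exists_fin_orderEmbedding_get_eq]
  refine ⟨OrderEmbedding.ofStrictMono (Fin.cast (by simp) ∘ t ∘ Fin.cast (by simp))
    ((Fin.cast_strictMono _).comp (ht.comp (Fin.cast_strictMono _))), fun i => ?_⟩
  simp [Fin.cast]

lemma List.exists_strictMono_of_sublist_ofFn {α : Type*} {n k : ℕ} {c : Fin n → α} {l : List α}
    (h : l.Sublist (List.ofFn c)) (hl : l.length = k) :
    ∃ t : Fin k → Fin n, StrictMono t ∧ List.ofFn (c ∘ t) = l := by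
  subst hl
  obtain ⟨f, hf⟩ := List.sublist_iff_exists_fin_orderEmbedding_get_eq.1 h
  refine ⟨Fin.cast (by simp) ∘ f, (Fin.cast_strictMono _).comp f.strictMono, ?_⟩
  refine List.ext_get (by simp) fun i _ hi => ?_
  simpa [Fin.cast] using (hf ⟨i, hi⟩).symm

def Alternates {m : ℕ} (f : Fin m → ℝ) : Prop :=
  ∃ σ : ℝ, ∀ k : Fin m, 0 < σ * (-1) ^ (k : ℕ) * f k

def WeaklyAlternates {m : ℕ} (f : Fin m → ℝ) : Prop :=
  ∃ σ : ℝ, σ ≠ 0 ∧ ∀ k : Fin m, 0 ≤ σ * (-1) ^ (k : ℕ) * f k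

lemma Alternates.ne_zero {m : ℕ} {f : Fin m → ℝ} (h : Alternates f) (k : Fin m) : f k ≠ 0 := by
  obtain ⟨σ, hσ⟩ := h
  intro hk
  simpa [hk] using hσ k

lemma Alternates.mul_neg {m : ℕ} {f : Fin (m + 1) → ℝ} (h : Alternates f) (k : Fin m) :
    f k.castSucc * f k.succ < 0 := by
  obtain ⟨σ, hσ⟩ := h
  have h₁ := hσ k.castSucc
  have h₂ := hσ k.succ
  simp only [Fin.val_castSucc, Fin.val_succ, pow_succ] at h₁ h₂
  nlinarith [mul_pos h₁ h₂, sq_nonneg (σ * (-1) ^ (k : ℕ))]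

lemma Alternates.weaklyAlternates {m : ℕ} {f : Fin m → ℝ} (h : Alternates f) :
    WeaklyAlternates f := by
  obtain ⟨σ, hσ⟩ := h
  by_cases hσ0 : σ = 0
  · exact ⟨1, one_ne_zero, fun k => by simpa [hσ0] using hσ k⟩
  · exact ⟨σ, hσ0, fun k => (hσ k).le⟩

lemma alternates_iff_isChain {m : ℕ} {f : Fin (m + 1) → ℝ} :
    Alternates f ↔ f 0 ≠ 0 ∧ (List.ofFn f).IsChain (fun a b => a * b < 0) := by
  refine ⟨fun h => ⟨h.ne_zero 0, List.isChain_ofFn.2 fun i hi => h.mul_neg ⟨i, by omega⟩⟩,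
    fun ⟨h0, h⟩ => ⟨f 0, Fin.induction (by simpa using mul_self_pos.2 h0) fun k hk => ?_⟩⟩
  have hk' : f k.castSucc * f k.succ < 0 := List.isChain_ofFn.1 h k (by omega)
  simp only [Fin.val_castSucc, Fin.val_succ, pow_succ] at hk ⊢
  by_contra! hneg
  nlinarith [mul_neg_of_pos_of_neg hk hk', mul_nonneg (mul_self_nonneg (f k.castSucc))
    (show 0 ≤ f 0 * (-1) ^ (k : ℕ) * f k.succ by linarith)]

lemma Alternates.cons {m : ℕ} {f : Fin (m + 1) → ℝ} (h : Alternates f) {a : ℝ}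
    (ha : a * f 0 < 0) : Alternates (Fin.cons a f : Fin (m + 2) → ℝ) := by
  obtain ⟨σ, hσ⟩ := h
  refine ⟨-σ, Fin.cases ?_ fun k => ?_⟩
  · have := hσ 0
    simp only [Fin.val_zero, pow_zero, mul_one, Fin.cons_zero] at this ⊢
    by_contra! h
    nlinarith [mul_neg_of_pos_of_neg this ha, mul_nonneg (show 0 ≤ σ * a by linarith)
      (mul_self_nonneg (f 0))]
  · simpa [pow_succ] using hσ k

lemma sMinus_zero (n : ℕ) : sMinus (0 : Fin n → ℝ) = 0 := by
  rw [sMinus, sMinusList, List.filter_eq_nil_iff.2 (by simp)]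
  rfl

lemma sMinus_eq_signChanges {n : ℕ} {z : Fin n → ℝ} (hz : ∀ i, z i ≠ 0) :
    sMinus z = signChanges (List.ofFn z) := by
  rw [sMinus, sMinusList, List.filter_eq_self.2]
  simpa [List.mem_ofFn] using hz

lemma sMinus_tail_le {n : ℕ} (c : Fin (n + 1) → ℝ) : sMinus (Fin.tail c) ≤ sMinus c := by
  rw [sMinus, sMinus, sMinusList, sMinusList, List.ofFn_succ, List.filter_cons]
  split_ifs
  · exact signChanges_le_cons _ _
  · rfl

theorem le_sMinus_of_alternates {n m : ℕ} {c : Fin n → ℝ} {t : Fin (m + 1) → Fin n}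
    (ht : StrictMono t) (h : Alternates (c ∘ t)) : m ≤ sMinus c := by
  have hsub := (List.ofFn_comp_sublist c ht).filter (fun a => decide (a ≠ 0))
  rw [List.filter_eq_self.2 (List.forall_mem_ofFn_iff.2 fun k => by simpa using h.ne_zero k)]
    at hsub
  have := signChanges_le_of_sublist hsub fun x hx => by simpa using (List.mem_filter.1 hx).2
  rw [signChanges_of_isChain (alternates_iff_isChain.1 h).2, List.length_ofFn] at this
  simpa [sMinus, sMinusList] using this

theorem exists_alternates_of_le_sMinus {n m : ℕ} {c : Fin n → ℝ} (hc : c ≠ 0)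
    (hm : m ≤ sMinus c) : ∃ t : Fin (m + 1) → Fin n, StrictMono t ∧ Alternates (c ∘ t) := by
  set F := (List.ofFn c).filter (fun a => decide (a ≠ 0))
  have hF : ∀ x ∈ F, x ≠ 0 := fun x hx => by simpa using (List.mem_filter.1 hx).2
  obtain ⟨a, M, hF_eq⟩ : ∃ a M, F = a :: M := by
    obtain ⟨i, hi⟩ := Function.ne_iff.1 hc
    exact List.exists_cons_of_ne_nil
      (List.ne_nil_of_mem (List.mem_filter.2 ⟨List.mem_ofFn.2 ⟨i, rfl⟩, by simpa using hi⟩))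
  obtain ⟨l, hsub, hchain, hlen⟩ := exists_isChain_cons_sublist a M (hF_eq ▸ hF)
  have hsc : signChanges (a :: M) = sMinus c := by rw [← hF_eq]; rfl
  have hsubF : ((a :: l).take (m + 1)).Sublist F :=
    hF_eq ▸ (List.take_sublist _ _).trans hsub
  obtain ⟨t, ht, hct⟩ := List.exists_strictMono_of_sublist_ofFn (k := m + 1)
    (hsubF.trans List.filter_sublist) (by simp; omega)
  refine ⟨t, ht, alternates_iff_isChain.2 ⟨hF _ (hsubF.subset ?_), hct ▸ hchain.take _⟩⟩
  exact hct ▸ List.mem_ofFn.2 ⟨0, rfl⟩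

lemma replZeros_ne_zero {n : ℕ} (y : Fin n → ℝ) (ε : Fin n → Bool) (i : Fin n) :
    replZeros y ε i ≠ 0 := by
  unfold replZeros
  split_ifs <;> simp_all

lemma replZeros_of_ne_zero {n : ℕ} {y : Fin n → ℝ} (ε : Fin n → Bool) {i : Fin n}
    (h : y i ≠ 0) : replZeros y ε i = y i :=
  if_neg h

lemma sMinus_replZeros_le_sPlus {n : ℕ} (y : Fin n → ℝ) (ε : Fin n → Bool) :
    sMinus (replZeros y ε) ≤ sPlus y := by
  rw [sMinus_eq_signChanges (replZeros_ne_zero y ε)]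
  exact Finset.le_sup (f := fun ε => signChanges (List.ofFn (replZeros y ε)))
    (Finset.mem_univ ε)

theorem le_sPlus_of_weaklyAlternates {n m : ℕ} {y : Fin n → ℝ} {t : Fin (m + 1) → Fin n}
    (ht : StrictMono t) (h : WeaklyAlternates (y ∘ t)) : m ≤ sPlus y := by
  obtain ⟨σ, hσ, hy⟩ := h
  -- fill the zero entries `y (t k)` with the sign of `σ * (-1) ^ k`
  set ε : Fin n → Bool := fun i =>
    decide (0 < σ * (-1) ^ ((Function.invFun t i : Fin (m + 1)) : ℕ))
  refine (le_sMinus_of_alternates ht ⟨σ, fun k => ?_⟩).trans (sMinus_replZeros_le_sPlus y ε)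
  have hs : σ * (-1) ^ (k : ℕ) ≠ 0 := mul_ne_zero hσ (pow_ne_zero _ (by norm_num))
  have hk := hy k
  simp only [Function.comp_apply] at hk ⊢
  by_cases h0 : y (t k) = 0
  · have hε : ε (t k) = decide (0 < σ * (-1) ^ (k : ℕ)) := by
      simp [ε, Function.leftInverse_invFun ht.injective k]
    simp only [replZeros, h0, if_true, hε]
    rcases hs.lt_or_gt with hneg | hpos
    · simp [hneg.not_gt]
      linarith
    · simp [hpos]
  · rw [replZeros_of_ne_zero ε h0]
    exact lt_of_le_of_ne hk (mul_ne_zero hs h0).symm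

theorem exists_weaklyAlternates_of_succ_le_sPlus {n m : ℕ} {y : Fin n → ℝ}
    (h : m + 1 ≤ sPlus y) :
    ∃ t : Fin (m + 2) → Fin n, StrictMono t ∧ WeaklyAlternates (y ∘ t) := by
  obtain ⟨ε, -, hε⟩ := (Finset.le_sup_iff (by simp : (⊥ : ℕ) < m + 1)).1 h
  rw [← sMinus_eq_signChanges (replZeros_ne_zero y ε)] at hε
  have hz : replZeros y ε ≠ 0 := fun h0 => by rw [h0, sMinus_zero] at hε; omega
  obtain ⟨t, ht, σ, hσ⟩ := exists_alternates_of_le_sMinus hz hε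
  refine ⟨t, ht, σ, fun h0 => by simpa [h0] using hσ 0, fun k => ?_⟩
  by_cases h0 : y (t k) = 0
  · simp [h0]
  · simpa [replZeros_of_ne_zero ε h0] using (hσ k).le

theorem le_sPlus_of_comp_eq_zero {m k : ℕ} {y : Fin m → ℝ} {α : Fin k → Fin m}
    (hα : Function.Injective α) (hy : y ∘ α = 0) (hk : k < m) : k ≤ sPlus y := by
  classical
  set S := Finset.univ.image α
  have hS : S.card = k := by simp [S, Finset.card_image_of_injective _ hα]
  obtain ⟨e, -, he⟩ := Finset.exists_mem_notMem_of_card_lt_card (s := S) (t := Finset.univ)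
    (by simpa [hS])
  have hT : (insert e S).card = k + 1 := by rw [Finset.card_insert_of_notMem he, hS]
  set t := (insert e S).orderEmbOfFin hT
  obtain ⟨q, hq⟩ : ∃ q, t q = e := by
    rw [← Set.mem_range, Finset.range_orderEmbOfFin]
    exact Finset.mem_insert_self e S
  have hzero : ∀ r, r ≠ q → y (t r) = 0 := by
    intro r hr
    have : t r ∈ S := by
      rcases Finset.mem_insert.1 (Finset.orderEmbOfFin_mem _ hT r) with h | h
      · exact absurd (t.injective (h.trans hq.symm)) hr
      · exact h
    obtain ⟨j, -, hj⟩ := Finset.mem_image.1 this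
    rw [← hj]
    exact congrFun hy j
  set σ : ℝ := if 0 ≤ (-1) ^ (q : ℕ) * y e then 1 else -1
  refine le_sPlus_of_weaklyAlternates t.strictMono
    ⟨σ, by simp only [σ]; split_ifs <;> norm_num, fun r => ?_⟩
  by_cases hr : r = q
  · subst hr
    simp only [Function.comp_apply, hq, σ]
    split_ifs <;> linarith
  · simp [hzero r hr]

theorem sMinus_lt_of_support_subset_range {n k : ℕ} {c : Fin n → ℝ} {β : Fin k → Fin n}
    (hc : c ≠ 0) (h : ∀ i, c i ≠ 0 → i ∈ Set.range β) : sMinus c < k := by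
  obtain ⟨t, ht, halt⟩ := exists_alternates_of_le_sMinus hc le_rfl
  choose g hg using fun j => h (t j) (halt.ne_zero j)
  have hg_inj : Function.Injective g := fun a b hab => ht.injective (by rw [← hg a, ← hg b, hab])
  simpa using Fintype.card_le_of_injective g hg_inj

theorem sMinus_lt {n : ℕ} {c : Fin n → ℝ} (hc : c ≠ 0) : sMinus c < n :=
  sMinus_lt_of_support_subset_range (β := id) hc fun i _ => ⟨i, rfl⟩

lemma extend_ne_zero {n k : ℕ} {β : Fin k → Fin n} (hβ : Function.Injective β)
    {ξ : Fin k → ℝ} (hξ : ξ ≠ 0) : Function.extend β ξ 0 ≠ 0 := fun h0 =>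
  hξ (funext fun j => by simpa [hβ.extend_apply] using congrFun h0 (β j))

lemma sMinus_extend_lt {n k : ℕ} {β : Fin k → Fin n} (hβ : Function.Injective β)
    {ξ : Fin k → ℝ} (hξ : ξ ≠ 0) : sMinus (Function.extend β ξ 0) < k :=
  sMinus_lt_of_support_subset_range (β := β) (extend_ne_zero hβ hξ) fun i hi => by
    by_contra h
    exact hi (by simp [Function.extend_apply' _ _ _ h])

/-! ### Block decompositions -/

lemma mul_nonneg_of_sMinus_eq_zero {n : ℕ} {c : Fin n → ℝ} (h : sMinus c = 0) (i j : Fin n) :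
    0 ≤ c i * c j := by
  wlog hij : i < j generalizing i j
  · rcases (not_lt.1 hij).lt_or_eq with hji | rfl
    · simpa [mul_comm] using this j i hji
    · exact mul_self_nonneg _
  by_contra! hneg
  have hi : c i ≠ 0 := fun h0 => by simp [h0] at hneg
  have : 1 ≤ sMinus c := le_sMinus_of_alternates (t := ![i, j]) (by simpa using hij)
    ⟨c i, Fin.forall_fin_two.2 ⟨by simp [hi], by simp; linarith⟩⟩
  omega

lemma Fin.monotone_cons {α : Type*} [Preorder α] {n : ℕ} {f : Fin n → α} {a : α}
    (ha : ∀ j, a ≤ f j) (hf : Monotone f) : Monotone (Fin.cons a f : Fin (n + 1) → α) := by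
  intro i j hij
  induction i using Fin.cases with
  | zero => induction j using Fin.cases <;> simp [ha]
  | succ i =>
    induction j using Fin.cases with
    | zero => exact absurd hij (by simp)
    | succ j => simpa using hf (Fin.succ_le_succ_iff.1 hij)

/-- The fibres of the monotone map `φ` cut `Fin n` into `k` consecutive blocks, with
representatives `ι`; on each block `c` is a nonnegative multiple `w` of a constant `ξ`. -/
structure BlockForm {n : ℕ} (c : Fin n → ℝ) (k : ℕ) where
  φ : Fin n → Fin k
  ι : Fin k → Fin n
  ξ : Fin k → ℝ
  w : Fin n → ℝ
  monotone : Monotone φ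
  φ_ι : ∀ j, φ (ι j) = j
  w_nonneg : ∀ i, 0 ≤ w i
  w_ι_pos : ∀ j, 0 < w (ι j)
  eq : ∀ i, c i = ξ (φ i) * w i

namespace BlockForm

variable {n k : ℕ}

def consSingleton {c : Fin (n + 1) → ℝ} (b : BlockForm (Fin.tail c) k) :
    BlockForm c (k + 1) where
  φ := Fin.cons 0 (Fin.succ ∘ b.φ)
  ι := Fin.cons 0 (Fin.succ ∘ b.ι)
  ξ := Fin.cons (c 0) b.ξ
  w := Fin.cons 1 b.w
  monotone :=
    Fin.monotone_cons (fun _ => Fin.zero_le _) (Fin.strictMono_succ.monotone.comp b.monotone)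
  φ_ι := Fin.cases (by simp) fun j => by simp [b.φ_ι]
  w_nonneg := Fin.cases (by simp) fun i => by simpa using b.w_nonneg i
  w_ι_pos := Fin.cases (by simp) fun j => by simpa using b.w_ι_pos j
  eq := Fin.cases (by simp) fun i => by simpa [Fin.tail] using b.eq i

def consMerge {c : Fin (n + 1) → ℝ} (b : BlockForm (Fin.tail c) (k + 1)) {w₀ : ℝ} (hw₀ : 0 ≤ w₀)
    (h : c 0 = b.ξ 0 * w₀) : BlockForm c (k + 1) where
  φ := Fin.cons 0 b.φ
  ι := Fin.succ ∘ b.ι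
  ξ := b.ξ
  w := Fin.cons w₀ b.w
  monotone := Fin.monotone_cons (fun _ => Fin.zero_le _) b.monotone
  φ_ι j := by simp [b.φ_ι]
  w_nonneg := Fin.cases (by simpa using hw₀) fun i => by simpa using b.w_nonneg i
  w_ι_pos j := by simpa using b.w_ι_pos j
  eq := Fin.cases (by simpa using h) fun i => by simpa [Fin.tail] using b.eq i

lemma strictMono_of_φ_apply_eq {c : Fin n → ℝ} (b : BlockForm c k) {r : Fin k → Fin n}
    (hr : ∀ j, b.φ (r j) = j) : StrictMono r := fun i j hij =>
  lt_of_not_ge fun hji => (hij.trans_le (by simpa [hr] using b.monotone hji)).false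

/-- Consecutive entries of an alternating subsequence cannot share a block. -/
lemma comp_eq_id {c : Fin n → ℝ} (b : BlockForm c (k + 1)) {t : Fin (k + 1) → Fin n}
    (ht : StrictMono t) (h : Alternates (c ∘ t)) : b.φ ∘ t = id := by
  refine StrictMono.eq_id (Fin.strictMono_iff_lt_succ.2 fun j => ?_)
  refine lt_of_le_of_ne (b.monotone (ht Fin.castSucc_lt_succ).le) fun hφ => ?_
  have := h.mul_neg j
  simp only [Function.comp_apply] at this hφ
  rw [b.eq, b.eq, hφ] at this
  nlinarith [mul_nonneg (mul_self_nonneg (b.ξ (b.φ (t j.succ))))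
    (mul_nonneg (b.w_nonneg (t j.castSucc)) (b.w_nonneg (t j.succ)))]

end BlockForm

lemma nonempty_blockForm_one {n : ℕ} (c : Fin n → ℝ) (hn : 0 < n) (h : ∀ i j, 0 ≤ c i * c j) :
    Nonempty (BlockForm c 1) := by
  by_cases hc : c = 0
  · exact ⟨{
      φ := 0
      ι := fun _ => ⟨0, hn⟩
      ξ := 0
      w := 1
      monotone := monotone_const
      φ_ι := fun _ => Subsingleton.elim _ _
      w_nonneg := fun _ => zero_le_one
      w_ι_pos := fun _ => one_pos
      eq := fun i => by simp [hc] }⟩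
  · obtain ⟨i₀, hi₀ : c i₀ ≠ 0⟩ := Function.ne_iff.1 hc
    refine ⟨{
      φ := 0
      ι := fun _ => i₀
      ξ := fun _ => c i₀
      w := fun i => c i / c i₀
      monotone := monotone_const
      φ_ι := fun _ => Subsingleton.elim _ _
      w_nonneg := fun i => ?_
      w_ι_pos := fun _ => by simp [hi₀]
      eq := fun i => ?_ }⟩
    · rw [← mul_div_mul_right (c i) (c i₀) hi₀]
      exact div_nonneg (h i i₀) (mul_self_nonneg _)
    · field_simp

theorem nonempty_blockForm : ∀ {n : ℕ} (k : ℕ) (c : Fin n → ℝ), k < n → sMinus c ≤ k →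
    Nonempty (BlockForm c (k + 1))
  | _, 0, c, hn, hc => nonempty_blockForm_one c hn (mul_nonneg_of_sMinus_eq_zero (by omega))
  | 0, _ + 1, _, hn, _ => absurd hn (by omega)
  | n + 1, k + 1, c, hn, hc => by
    by_cases htail : sMinus (Fin.tail c) ≤ k
    · obtain ⟨b⟩ := nonempty_blockForm k (Fin.tail c) (by omega) htail
      exact ⟨b.consSingleton⟩
    have htail' : k + 1 ≤ sMinus (Fin.tail c) := by omega
    have hc' : Fin.tail c ≠ 0 := fun h0 => by rw [h0, sMinus_zero] at htail'; omega
    obtain ⟨b⟩ := nonempty_blockForm (k + 1) (Fin.tail c) (by have := sMinus_lt hc'; omega)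
      ((sMinus_tail_le c).trans hc)
    obtain ⟨t, ht, halt⟩ := exists_alternates_of_le_sMinus hc' htail'
    have ht0 : Fin.tail c (t 0) = b.ξ 0 * b.w (t 0) := by
      rw [b.eq, show b.φ (t 0) = 0 from congrFun (b.comp_eq_id ht halt) 0]
    -- `t 0` lies in the first block of the tail; were its sign opposite to that of `c 0`,
    -- prepending `0` to `t` would give `k + 2` sign changes of `c`
    have hsign : 0 ≤ c 0 * Fin.tail c (t 0) := by
      by_contra! hneg
      have := le_sMinus_of_alternates (t := Fin.cons 0 (Fin.succ ∘ t))
        (Fin.strictMono_cons.2 ⟨fun _ => Fin.succ_pos _, Fin.strictMono_succ.comp ht⟩)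
        (by rw [Fin.comp_cons]; exact halt.cons hneg)
      omega
    have hne : b.ξ 0 * b.w (t 0) ≠ 0 := ht0 ▸ halt.ne_zero 0
    have hw : 0 < b.w (t 0) := lt_of_le_of_ne (b.w_nonneg _) (right_ne_zero_of_mul hne).symm
    have hξ : b.ξ 0 ≠ 0 := left_ne_zero_of_mul hne
    refine ⟨b.consMerge (w₀ := c 0 / b.ξ 0) ?_ (by field_simp)⟩
    rw [ht0, ← mul_assoc, mul_nonneg_iff_of_pos_right hw] at hsign
    rw [← mul_div_mul_right (c 0) (b.ξ 0) hξ]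
    exact div_nonneg hsign (mul_self_nonneg _)

/-! ### Strictly sign-regular matrices diminish variation -/

open Matrix

lemma ssrof_iff_exists_sign {m n k : ℕ} {A : Matrix (Fin m) (Fin n) ℝ} :
    SSRof A k ↔ ∃ s : ℝ, ∀ (α : Fin k → Fin m) (β : Fin k → Fin n), StrictMono α → StrictMono β →
      0 < s * (A.submatrix α β).det := by
  constructor
  · rintro (h | h)
    · exact ⟨1, fun α β hα hβ => by simpa using h α β hα hβ⟩
    · exact ⟨-1, fun α β hα hβ => by simpa using h α β hα hβ⟩
  · rintro ⟨s, hs⟩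
    rcases lt_or_ge 0 s with hpos | hnonpos
    · exact Or.inl fun α β hα hβ => pos_of_mul_pos_right (hs α β hα hβ) hpos.le
    · exact Or.inr fun α β hα hβ => neg_of_mul_pos_right (hs α β hα hβ) hnonpos

lemma Matrix.det_mul_eq_sum_det_submatrix {R ι n : Type*} [CommRing R] [Fintype ι] [Fintype n]
    [DecidableEq n] (X : Matrix n ι R) (P : Matrix ι n R) :
    (X * P).det = ∑ r : n → ι, (∏ j, P (r j) j) * (X.submatrix id r).det := by
  simp only [det_apply', mul_apply, Finset.prod_univ_sum, Fintype.piFinset_univ, Finset.mul_sum,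
    submatrix_apply, id]
  rw [Finset.sum_comm]
  refine Finset.sum_congr rfl fun r _ => Finset.sum_congr rfl fun σ _ => ?_
  rw [Finset.prod_mul_distrib]
  ring

def altMinors {R : Type*} [CommRing R] {m : ℕ} (M : Matrix (Fin m) (Fin (m + 1)) R) :
    Fin (m + 1) → R :=
  fun q => (-1) ^ (q : ℕ) * (M.submatrix id q.succAbove).det

/-- Laplace expansion along the first row of the singular matrix obtained by repeating the
`r`-th row of `M` on top. -/
lemma mulVec_altMinors {R : Type*} [CommRing R] {m : ℕ} (M : Matrix (Fin m) (Fin (m + 1)) R) :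
    M *ᵥ altMinors M = 0 := by
  ext r
  have hdet := det_succ_row_zero (Matrix.of (Fin.cons (M r) M))
  rw [det_zero_of_row_eq (i := 0) (j := r.succ) (Fin.succ_ne_zero r).symm rfl] at hdet
  rw [Pi.zero_apply, hdet]
  simp only [mulVec, dotProduct, altMinors]
  refine Finset.sum_congr rfl fun q _ => ?_
  rw [show (of (Fin.cons (M r) M)).submatrix Fin.succ q.succAbove = M.submatrix id q.succAbove
    from rfl]
  change M r q * _ = (-1) ^ (q : ℕ) * M r q * _
  ring

namespace BlockForm

variable {n k : ℕ} {c : Fin n → ℝ}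

def weights (b : BlockForm c k) : Matrix (Fin n) (Fin k) ℝ :=
  Matrix.of fun i j => if b.φ i = j then b.w i else 0

lemma weights_mulVec (b : BlockForm c k) : b.weights *ᵥ b.ξ = c := by
  ext i
  simp [weights, mulVec, dotProduct, b.eq i, mul_comm]

lemma ssrof_mul_weights {m : ℕ} {A : Matrix (Fin m) (Fin n) ℝ} (hA : SSRof A k)
    (b : BlockForm c k) : SSRof (A * b.weights) k := by
  obtain ⟨s, hs⟩ := ssrof_iff_exists_sign.1 hA
  refine ssrof_iff_exists_sign.2 ⟨s, fun α β hα hβ => ?_⟩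
  rw [hβ.eq_id, show (A * b.weights).submatrix α id = A.submatrix α id * b.weights from rfl,
    det_mul_eq_sum_det_submatrix, Finset.mul_sum]
  have hterm : ∀ r : Fin k → Fin n,
      0 ≤ s * ((∏ j, b.weights (r j) j) * ((A.submatrix α id).submatrix id r).det) := by
    intro r
    by_cases hr : ∀ j, b.φ (r j) = j
    · rw [mul_left_comm]
      exact mul_nonneg (Finset.prod_nonneg fun j _ => by simp [weights, hr, b.w_nonneg])
        (hs α r hα (b.strictMono_of_φ_apply_eq hr)).le
    · obtain ⟨j, hj⟩ := not_forall.1 hr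
      rw [Finset.prod_eq_zero (Finset.mem_univ j) (by simp [weights, hj])]
      simp
  refine Finset.sum_pos' (fun r _ => hterm r) ⟨b.ι, Finset.mem_univ _, ?_⟩
  rw [mul_left_comm]
  exact mul_pos (Finset.prod_pos fun j _ => by simp [weights, b.φ_ι, b.w_ι_pos])
    (hs α b.ι hα (b.strictMono_of_φ_apply_eq b.φ_ι))

end BlockForm

theorem sPlus_mulVec_le {n p : ℕ} {B : Matrix (Fin n) (Fin (p + 1)) ℝ} (hB : SSRof B (p + 1))
    {ξ : Fin (p + 1) → ℝ} (hξ : ξ ≠ 0) : sPlus (B *ᵥ ξ) ≤ p := by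
  obtain ⟨s, hs⟩ := ssrof_iff_exists_sign.1 hB
  have hs' : ∀ ρ, StrictMono ρ → 0 < s * (B.submatrix ρ id).det :=
    fun ρ hρ => hs ρ id hρ strictMono_id
  by_contra! hlt
  obtain ⟨t, ht, σ, hσ, hy⟩ := exists_weaklyAlternates_of_succ_le_sPlus hlt
  set w := altMinors (B.submatrix t id)ᵀ
  have hw : ∀ q, w q = (-1) ^ (q : ℕ) * (B.submatrix (t ∘ q.succAbove) id).det := fun q => by
    simp only [w, altMinors, ← det_transpose (B.submatrix (t ∘ q.succAbove) id)]
    rfl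
  have horth : (B.submatrix t id *ᵥ ξ) ⬝ᵥ w = 0 := by
    rw [dotProduct_comm, dotProduct_mulVec, ← mulVec_transpose, mulVec_altMinors, zero_dotProduct]
  have hyt : ∀ q, (B *ᵥ ξ) (t q) = (B.submatrix t id *ᵥ ξ) q := fun q => rfl
  have hsum : ∑ q : Fin (p + 2), σ * (-1) ^ (q : ℕ) * (B *ᵥ ξ) (t q) *
      (s * (B.submatrix (t ∘ q.succAbove) id).det) = 0 := by
    rw [← mul_zero (σ * s), ← horth, dotProduct, Finset.mul_sum]
    refine Finset.sum_congr rfl fun q _ => ?_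
    rw [hw, hyt]
    ring
  have hzero : ∀ q, (B *ᵥ ξ) (t q) = 0 := by
    intro q
    have hD := hs' _ (ht.comp (Fin.strictMono_succAbove q))
    have := (Finset.sum_eq_zero_iff_of_nonneg fun q _ =>
      mul_nonneg (hy q) (hs' _ (ht.comp (Fin.strictMono_succAbove q))).le).1 hsum q
      (Finset.mem_univ q)
    rcases mul_eq_zero.1 this with h | h
    · simpa [hσ] using h
    · exact absurd h hD.ne'
  apply (hs' _ (ht.comp (Fin.strictMono_succAbove 0))).ne'
  rw [(exists_mulVec_eq_zero_iff (M := B.submatrix (t ∘ Fin.succAbove 0) id)).1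
    ⟨ξ, hξ, funext fun i => hzero _⟩, mul_zero]

def VariationDiminishing {m n : ℕ} (A : Matrix (Fin m) (Fin n) ℝ) (p : ℕ) : Prop :=
  ∀ c : Fin n → ℝ, c ≠ 0 → sMinus c ≤ p → sPlus (A *ᵥ c) ≤ p

theorem SSRof.variationDiminishing {m n p : ℕ} {A : Matrix (Fin m) (Fin n) ℝ}
    (hA : SSRof A (p + 1)) (hp : p < n) : VariationDiminishing A p := by
  intro c hc hsc
  obtain ⟨b⟩ := nonempty_blockForm p c hp hsc
  have hξ : b.ξ ≠ 0 := fun h0 => hc (funext fun i => by simp [b.eq i, h0])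
  rw [← b.weights_mulVec, mulVec_mulVec]
  exact sPlus_mulVec_le (b.ssrof_mul_weights hA) hξ

/-! ### Variation-diminishing matrices are strictly sign-regular -/

lemma mul_pos_trans {a b c : ℝ} (hab : 0 < a * b) (hbc : 0 < b * c) : 0 < a * c :=
  pos_of_mul_pos_right (by nlinarith [mul_pos hab hbc] : 0 < b * b * (a * c)) (mul_self_nonneg b)

theorem Finset.mul_pos_of_forall_erase {α : Type*} [DecidableEq α] {k : ℕ} (D : Finset α → ℝ)
    (hD : ∀ S : Finset α, S.card = k → D S ≠ 0)
    (h : ∀ T : Finset α, T.card = k + 1 → ∀ x ∈ T, ∀ y ∈ T, 0 < D (T.erase x) * D (T.erase y))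
    {S S' : Finset α} (hS : S.card = k) (hS' : S'.card = k) : 0 < D S * D S' := by
  induction hd : (S' \ S).card using Nat.strong_induction_on generalizing S with
  | _ d ih =>
    rcases (S' \ S).eq_empty_or_nonempty with hempty | ⟨x, hx⟩
    · obtain rfl : S' = S :=
        Finset.eq_of_subset_of_card_le (Finset.sdiff_eq_empty_iff_subset.1 hempty) (by omega)
      exact mul_self_pos.2 (hD S' hS)
    obtain ⟨z, hz⟩ : (S \ S').Nonempty := Finset.card_pos.1 <| by
      rw [Finset.card_sdiff_comm (hS.trans hS'.symm)]
      exact Finset.card_pos.2 ⟨x, hx⟩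
    have hxS := Finset.mem_sdiff.1 hx
    have hzS := Finset.mem_sdiff.1 hz
    have hT : (insert x S).card = k + 1 := by rw [Finset.card_insert_of_notMem hxS.2, hS]
    have hzT : z ∈ insert x S := Finset.mem_insert_of_mem hzS.1
    have h₁ := h _ hT x (Finset.mem_insert_self x S) z hzT
    rw [Finset.erase_insert hxS.2] at h₁
    have hdiff : S' \ (insert x S).erase z = (S' \ S).erase x := by
      ext y
      by_cases hyz : y = z
      · simp [hyz, hzS.2]
      · simp only [Finset.mem_sdiff, Finset.mem_erase, Finset.mem_insert]
        tauto
    refine mul_pos_trans h₁ (ih _ ?_ (by rw [Finset.card_erase_of_mem hzT, hT]; rfl) rfl)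
    rw [← hd, hdiff, Finset.card_erase_of_mem hx]
    exact Nat.sub_lt (Finset.card_pos.2 ⟨x, hx⟩) one_pos

theorem mul_pos_of_forall_succAbove {α : Type*} [LinearOrder α] {k : ℕ} (D : (Fin k → α) → ℝ)
    (hD : ∀ β, StrictMono β → D β ≠ 0)
    (h : ∀ γ : Fin (k + 1) → α, StrictMono γ → ∀ q q' : Fin (k + 1),
      0 < D (γ ∘ q.succAbove) * D (γ ∘ q'.succAbove))
    {β β' : Fin k → α} (hβ : StrictMono β) (hβ' : StrictMono β') : 0 < D β * D β' := by
  classical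
  set D' : Finset α → ℝ := fun S => if hS : S.card = k then D (S.orderEmbOfFin hS) else 0
  have hcard : ∀ β : Fin k → α, StrictMono β → (Finset.univ.image β).card = k := fun β hβ => by
    simp [Finset.card_image_of_injective _ hβ.injective]
  have himage : ∀ β : Fin k → α, StrictMono β → D' (Finset.univ.image β) = D β := fun β hβ => by
    simp only [D', dif_pos (hcard β hβ)]
    rw [← Finset.orderEmbOfFin_unique (hcard β hβ) (fun j => by simp) hβ]
  have herase : ∀ (T : Finset α) (hT : T.card = k + 1) (q : Fin (k + 1)),
      T.erase (T.orderEmbOfFin hT q) = Finset.univ.image (T.orderEmbOfFin hT ∘ q.succAbove) := by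
    intro T hT q
    have hγ := (T.orderEmbOfFin hT).strictMono.comp (Fin.strictMono_succAbove q)
    refine (Finset.eq_of_subset_of_card_le (fun y hy => ?_) ?_).symm
    · obtain ⟨j, -, rfl⟩ := Finset.mem_image.1 hy
      exact Finset.mem_erase.2 ⟨(T.orderEmbOfFin hT).injective.ne (Fin.succAbove_ne q j),
        Finset.orderEmbOfFin_mem _ _ _⟩
    · rw [Finset.card_erase_of_mem (Finset.orderEmbOfFin_mem _ _ _), hT, hcard _ hγ]
      rfl
  have := Finset.mul_pos_of_forall_erase D' (fun S hS => by
      simpa [D', hS] using hD _ (S.orderEmbOfFin hS).strictMono)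
    (fun T hT x hx y hy => by
      obtain ⟨q, rfl⟩ : x ∈ Set.range (T.orderEmbOfFin hT) := by simpa using hx
      obtain ⟨q', rfl⟩ : y ∈ Set.range (T.orderEmbOfFin hT) := by simpa using hy
      have hγ := (T.orderEmbOfFin hT).strictMono
      rw [herase, herase, himage _ (hγ.comp (Fin.strictMono_succAbove q)),
        himage _ (hγ.comp (Fin.strictMono_succAbove q'))]
      exact h _ hγ q q')
    (hcard β hβ) (hcard β' hβ')
  rwa [himage β hβ, himage β' hβ'] at this

lemma mulVec_extend_comp {m n k l : ℕ} {β : Fin k → Fin n} (hβ : Function.Injective β)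
    (A : Matrix (Fin m) (Fin n) ℝ) (ξ : Fin k → ℝ) (α : Fin l → Fin m) :
    (A *ᵥ Function.extend β ξ 0) ∘ α = A.submatrix α β *ᵥ ξ := by
  ext r
  simp only [Function.comp_apply, mulVec, dotProduct, submatrix_apply]
  rw [← Finset.sum_subset (Finset.subset_univ (Finset.univ.image β)) fun i _ hi => by
    rw [Function.extend_apply' _ _ _ (by simpa using hi), Pi.zero_apply, mul_zero]]
  rw [Finset.sum_image fun a _ b _ h => hβ h]
  simp [hβ.extend_apply]

lemma neg_one_pow_mul_self {R : Type*} [Ring R] (k : ℕ) : ((-1 : R) ^ k) * (-1) ^ k = 1 := by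
  rw [← pow_add, Even.neg_one_pow ⟨k, rfl⟩]

lemma exists_pos_sum_mul_eq_zero {ι : Type*} [Fintype ι] [DecidableEq ι] {D : ι → ℝ} {a b : ι}
    (ha : 0 < D a) (hb : D b < 0) : ∃ μ : ι → ℝ, (∀ q, 0 < μ q) ∧ ∑ q, μ q * D q = 0 := by
  set S := ∑ q, D q with hS
  rcases le_total 0 S with hS0 | hS0
  · refine ⟨fun q => 1 + if q = b then S / -D b else 0, fun q => ?_, ?_⟩
    · have : 0 ≤ S / -D b := div_nonneg hS0 (by linarith)
      dsimp only
      split_ifs <;> linarith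
    · simp only [add_mul, one_mul, ite_mul, zero_mul, Finset.sum_add_distrib, Finset.sum_ite_eq',
        Finset.mem_univ, if_true, ← hS]
      field_simp [hb.ne]
      ring
  · refine ⟨fun q => 1 + if q = a then -S / D a else 0, fun q => ?_, ?_⟩
    · have : 0 ≤ -S / D a := div_nonneg (by linarith) ha.le
      dsimp only
      split_ifs <;> linarith
    · simp only [add_mul, one_mul, ite_mul, zero_mul, Finset.sum_add_distrib, Finset.sum_ite_eq',
        Finset.mem_univ, if_true, ← hS]
      field_simp [ha.ne']
      ring

lemma exists_mulVec_eq_of_dotProduct_eq_zero {K : Type*} [Field K] {k : ℕ}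
    (B : Matrix (Fin (k + 1)) (Fin k) K) {a : Fin (k + 1)}
    (hB : (B.submatrix a.succAbove id).det ≠ 0) {w v : Fin (k + 1) → K} (hwa : w a ≠ 0)
    (hwB : w ᵥ* B = 0) (hwv : w ⬝ᵥ v = 0) : ∃ ξ, B *ᵥ ξ = v := by
  set B₀ := B.submatrix a.succAbove id
  set ξ := B₀⁻¹ *ᵥ (v ∘ a.succAbove)
  have hrest : ∀ j, (B *ᵥ ξ) (a.succAbove j) = v (a.succAbove j) := fun j => by
    change (B₀ *ᵥ ξ) j = _
    rw [mulVec_mulVec, mul_nonsing_inv _ (isUnit_iff_ne_zero.2 hB), one_mulVec]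
    rfl
  have hdot : w ⬝ᵥ (B *ᵥ ξ) = w ⬝ᵥ v := by rw [dotProduct_mulVec, hwB, zero_dotProduct, hwv]
  simp only [dotProduct, Fin.sum_univ_succAbove _ a, hrest] at hdot
  have ha : (B *ᵥ ξ) a = v a := mul_left_cancel₀ hwa (add_right_cancel hdot)
  refine ⟨ξ, funext fun i => ?_⟩
  rcases eq_or_ne i a with rfl | hi
  · exact ha
  · obtain ⟨j, rfl⟩ := Fin.exists_succAbove_eq hi
    exact hrest j

/-- The column space of `B` is the orthogonal complement of its signed maximal minors. -/
lemma exists_alternates_mulVec {k : ℕ} (B : Matrix (Fin (k + 1)) (Fin k) ℝ) {a b : Fin (k + 1)}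
    (ha : 0 < (B.submatrix a.succAbove id).det) (hb : (B.submatrix b.succAbove id).det < 0) :
    ∃ ξ, Alternates (B *ᵥ ξ) := by
  obtain ⟨μ, hμ, hμD⟩ := exists_pos_sum_mul_eq_zero
    (D := fun q : Fin (k + 1) => (B.submatrix q.succAbove id).det) ha hb
  set w := altMinors Bᵀ
  have hw : ∀ q, w q = (-1) ^ (q : ℕ) * (B.submatrix q.succAbove id).det := fun q => by
    simp only [w, altMinors, ← det_transpose (B.submatrix q.succAbove id)]
    rfl
  obtain ⟨ξ, hξ⟩ := exists_mulVec_eq_of_dotProduct_eq_zero B ha.ne' (w := w)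
    (v := fun q => (-1) ^ (q : ℕ) * μ q) (by rw [hw]; exact mul_ne_zero (by simp) ha.ne')
    (by rw [← mulVec_transpose, mulVec_altMinors])
    (by
      rw [← hμD, dotProduct]
      refine Finset.sum_congr rfl fun q _ => ?_
      rw [hw, mul_mul_mul_comm, neg_one_pow_mul_self, one_mul, mul_comm])
  refine ⟨ξ, 1, fun q => ?_⟩
  rw [hξ, one_mul, ← mul_assoc, neg_one_pow_mul_self, one_mul]
  exact hμ q

namespace VariationDiminishing

variable {m n p : ℕ} {A : Matrix (Fin m) (Fin n) ℝ}

theorem det_submatrix_ne_zero (hA : VariationDiminishing A p) (hm : p + 1 < m)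
    {α : Fin (p + 1) → Fin m} {β : Fin (p + 1) → Fin n} (hα : StrictMono α) (hβ : StrictMono β) :
    (A.submatrix α β).det ≠ 0 := by
  intro h0
  obtain ⟨ξ, hξ, hAξ⟩ := exists_mulVec_eq_zero_iff.2 h0
  have hle := hA _ (extend_ne_zero hβ.injective hξ)
    (Nat.le_of_lt_succ (sMinus_extend_lt hβ.injective hξ))
  have hge := le_sPlus_of_comp_eq_zero hα.injective
    (by rwa [mulVec_extend_comp hβ.injective]) hm
  omega

theorem det_submatrix_cols_succAbove_mul_pos (hA : VariationDiminishing A p) (hm : p + 1 < m)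
    {α : Fin (p + 1) → Fin m} (hα : StrictMono α) {γ : Fin (p + 2) → Fin n} (hγ : StrictMono γ)
    (q q' : Fin (p + 2)) :
    0 < (A.submatrix α (γ ∘ q.succAbove)).det * (A.submatrix α (γ ∘ q'.succAbove)).det := by
  set w := altMinors (A.submatrix α γ)
  have hw : w ≠ 0 := fun h0 => by
    have := congrFun h0 0
    simp only [w, altMinors, Pi.zero_apply, Fin.val_zero, pow_zero, one_mul] at this
    exact hA.det_submatrix_ne_zero hm hα (hγ.comp (Fin.strictMono_succAbove 0)) this
  set c := Function.extend γ w 0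
  have hc : c ≠ 0 := extend_ne_zero hγ.injective hw
  have hsc : p + 1 ≤ sMinus c := by
    by_contra! h
    have := le_sPlus_of_comp_eq_zero (y := A *ᵥ c) hα.injective
      (by rw [mulVec_extend_comp hγ.injective]; exact mulVec_altMinors _) hm
    have := hA c hc (by omega)
    omega
  obtain ⟨t, ht, σ, hσ⟩ := exists_alternates_of_le_sMinus hc hsc
  have hcard : (Finset.univ.image γ).card = p + 2 := by
    simp [Finset.card_image_of_injective _ hγ.injective]
  have htγ : t = γ := by
    refine (Finset.orderEmbOfFin_unique hcard (fun j => ?_) ht).trans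
      (Finset.orderEmbOfFin_unique hcard (fun j => by simp) hγ).symm
    by_contra h
    exact Alternates.ne_zero ⟨σ, hσ⟩ j
      (by simp [c, Function.extend_apply' _ _ _ (by simpa using h)])
  have hcγ : c ∘ γ = w := funext fun q => hγ.injective.extend_apply w 0 q
  rw [htγ, hcγ] at hσ
  have hs : ∀ q : Fin (p + 2), 0 < σ * (A.submatrix α (γ ∘ q.succAbove)).det := fun q => by
    have := hσ q
    rwa [show w q = (-1) ^ (q : ℕ) * (A.submatrix α (γ ∘ q.succAbove)).det from rfl,
      ← mul_assoc, mul_assoc σ, neg_one_pow_mul_self, mul_one] at this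
  exact mul_pos_trans (by rw [mul_comm]; exact hs q) (hs q')

theorem det_submatrix_rows_succAbove_mul_pos (hA : VariationDiminishing A p) (hm : p + 1 < m)
    {β : Fin (p + 1) → Fin n} (hβ : StrictMono β) {δ : Fin (p + 2) → Fin m} (hδ : StrictMono δ)
    (q q' : Fin (p + 2)) :
    0 < (A.submatrix (δ ∘ q.succAbove) β).det * (A.submatrix (δ ∘ q'.succAbove) β).det := by
  set D : Fin (p + 2) → ℝ := fun q : Fin (p + 2) => (A.submatrix (δ ∘ q.succAbove) β).det
  have hD : ∀ q, D q ≠ 0 := fun q =>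
    hA.det_submatrix_ne_zero hm (hδ.comp (Fin.strictMono_succAbove q)) hβ
  change 0 < D q * D q'
  wlog hq : 0 < D q generalizing q q'
  · rcases (hD q').lt_or_gt with h' | h'
    · exact mul_pos_of_neg_of_neg (lt_of_le_of_ne (not_lt.1 hq) (hD q)) h'
    · simpa [mul_comm] using this q' q h'
  by_contra! hneg
  obtain ⟨ξ, hξ⟩ := exists_alternates_mulVec (A.submatrix δ β) (a := q) (b := q') hq
    (lt_of_le_of_ne (nonpos_of_mul_nonpos_right hneg hq) (hD q'))
  have hξ0 : ξ ≠ 0 := fun h0 => hξ.ne_zero 0 (by simp [h0])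
  have hle := hA _ (extend_ne_zero hβ.injective hξ0)
    (Nat.le_of_lt_succ (sMinus_extend_lt hβ.injective hξ0))
  have hge := le_sPlus_of_weaklyAlternates hδ
    (by rw [mulVec_extend_comp hβ.injective]; exact hξ.weaklyAlternates)
  omega

end VariationDiminishing

theorem VariationDiminishing.ssrof {m n p : ℕ} {A : Matrix (Fin m) (Fin n) ℝ}
    (hA : VariationDiminishing A p) (hm : p + 1 < m) : SSRof A (p + 1) := by
  rw [ssrof_iff_exists_sign]
  by_cases hn : p + 1 ≤ n
  swap
  · exact ⟨1, fun α β hα hβ =>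
      absurd (Fintype.card_le_of_injective β hβ.injective) (by simpa using hn)⟩
  have hβ₀ := Fin.strictMono_castLE hn
  refine ⟨(A.submatrix (Fin.castLE hm.le) (Fin.castLE hn)).det, fun α β hα hβ => ?_⟩
  have hcols := mul_pos_of_forall_succAbove (fun β => (A.submatrix α β).det)
    (fun β hβ => hA.det_submatrix_ne_zero hm hα hβ)
    (fun γ hγ => hA.det_submatrix_cols_succAbove_mul_pos hm hα hγ) hβ hβ₀
  have hrows := mul_pos_of_forall_succAbove (fun α => (A.submatrix α (Fin.castLE hn)).det)
    (fun α hα => hA.det_submatrix_ne_zero hm hα hβ₀)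
    (fun δ hδ => hA.det_submatrix_rows_succAbove_mul_pos hm hβ₀ hδ)
    hα (Fin.strictMono_castLE hm.le)
  rw [mul_comm]
  exact mul_pos_trans hcols hrows

lemma ssrof_self_of_det_ne_zero {n : ℕ} {A : Matrix (Fin n) (Fin n) ℝ} (hA : A.det ≠ 0) :
    SSRof A n :=
  ssrof_iff_exists_sign.2 ⟨A.det, fun α β hα hβ => by
    rw [hα.eq_id, hβ.eq_id, submatrix_id_id]
    exact mul_self_pos.2 hA⟩

/-- For a nonsingular `A ∈ ℝ^{n×n}` and `p ∈ {0,…,n-1}`: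
(1) `s⁺(Ac) ≤ p` for every nonzero `c` with `s⁻(c) ≤ p`, iff
(2) `A` is `SSR_{p+1}`. -/
theorem nonstandard_VDP_iff_SSR (n : ℕ) (A : Matrix (Fin n) (Fin n) ℝ)
    (hA : A.det ≠ 0) (p : ℕ) (hp : p < n) :
    (∀ c : Fin n → ℝ, c ≠ 0 → sMinus c ≤ p → sPlus (A.mulVec c) ≤ p) ↔
      SSRof A (p + 1) := by
  refine ⟨fun hVD => ?_, fun hSSR => hSSR.variationDiminishing hp⟩
  obtain rfl | hn := (Nat.succ_le_of_lt hp).eq_or_lt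
  · exact ssrof_self_of_det_ne_zero hA
  · exact VariationDiminishing.ssrof hVD hn
end
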